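/- arXiv:2406.04499 — 3 statements merged into one kernel-verified Lean document; each statement's English description precedes it below -/
import Mathlib

section
/- Let H be a real Hilbert space, a : H × H → ℝ a continuous, symmetric, coercive bilinear form, j : H → ℝ convex, nonnegative, and Lipschitz continuous, L a continuous linear functional, and K ⊆ H a nonempty closed convex set. Then there exists u ∈ K such that a(u, v - u) + j(v) - j(u) ≥ L(v - u) for all v ∈ K. -/
/-!
The energy `E v = a v v / 2 + j v - L v` is `α`-strongly convex, continuous, and bounded below
(the Lipschitz bound on `j` makes it grow quadratically). By the midpoint inequality for strongly
convex functions, a minimising sequence on `K` is Cauchy, so it converges to a minimiser `u ∈ K`.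
Comparing `E u` with `E (u + t • (v - u))` and letting `t → 0⁺` gives the variational inequality.
-/

open Filter Topology Set

section StrongConvexity

variable {E : Type*} [NormedAddCommGroup E] [NormedSpace ℝ E] {s : Set E} {f g : E → ℝ}
  {m μ : ℝ}

lemma StrongConvexOn.add_convexOn (hf : StrongConvexOn s m f) (hg : ConvexOn ℝ s g) :
    StrongConvexOn s m (f + g) := by
  have h := UniformConvexOn.add hf hg.uniformConvexOn_zero
  rwa [add_zero] at h

lemma StrongConvexOn.mul_dist_sq_le (hf : StrongConvexOn s m f) (hμ : ∀ z ∈ s, μ ≤ f z)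
    {x y : E} (hx : x ∈ s) (hy : y ∈ s) :
    m / 8 * dist x y ^ 2 ≤ (f x - μ) / 2 + (f y - μ) / 2 := by
  obtain ⟨hs, hf⟩ := hf
  have hmid := hf hx hy (a := 1 / 2) (b := 1 / 2) (by norm_num) (by norm_num) (by norm_num)
  have hμmid := hμ _ (hs hx hy (a := 1 / 2) (b := 1 / 2) (by norm_num) (by norm_num) (by norm_num))
  simp only [smul_eq_mul] at hmid
  rw [dist_eq_norm]
  linarith

lemma StrongConvexOn.cauchySeq_of_tendsto (hf : StrongConvexOn s m f) (hm : 0 < m)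
    (hμ : ∀ z ∈ s, μ ≤ f z) {u : ℕ → E} (hu : ∀ n, u n ∈ s)
    (hfu : Tendsto (f ∘ u) atTop (𝓝 μ)) : CauchySeq u := by
  refine Metric.cauchySeq_iff'.2 fun ε hε => ?_
  have hδ : 0 < m / 8 * ε ^ 2 := by positivity
  obtain ⟨N, hN⟩ := eventually_atTop.1 ((tendsto_order.1 hfu).2 _ (lt_add_of_pos_right μ hδ))
  refine ⟨N, fun n hn => ?_⟩
  have hsq : m / 8 * dist (u n) (u N) ^ 2 < m / 8 * ε ^ 2 := by
    have hdist := hf.mul_dist_sq_le hμ (hu n) (hu N)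
    have hfn : f (u n) < μ + m / 8 * ε ^ 2 := hN n hn
    have hfN : f (u N) < μ + m / 8 * ε ^ 2 := hN N le_rfl
    linarith
  exact lt_of_pow_lt_pow_left₀ 2 hε.le (lt_of_mul_lt_mul_left hsq (by positivity))

theorem StrongConvexOn.exists_isMinOn [CompleteSpace E] (hf : StrongConvexOn s m f)
    (hm : 0 < m) (hs : IsClosed s) (hne : s.Nonempty) (hcont : ContinuousOn f s)
    (hbdd : BddBelow (f '' s)) : ∃ x ∈ s, IsMinOn f s x := by
  have hμ : ∀ z ∈ s, sInf (f '' s) ≤ f z := fun z hz => csInf_le hbdd (mem_image_of_mem f hz)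
  obtain ⟨y, -, hy, hys⟩ := exists_seq_tendsto_sInf (hne.image f) hbdd
  choose u hus hfu using hys
  have hfu' : Tendsto (f ∘ u) atTop (𝓝 (sInf (f '' s))) := by
    simpa only [Function.comp_def, hfu] using hy
  obtain ⟨x, hx⟩ := cauchySeq_tendsto_of_complete (hf.cauchySeq_of_tendsto hm hμ hus hfu')
  have hxs : x ∈ s := hs.mem_of_tendsto hx (.of_forall hus)
  have hfx : f x = sInf (f '' s) := tendsto_nhds_unique
    ((hcont x hxs).tendsto.comp (tendsto_nhdsWithin_iff.2 ⟨hx, .of_forall hus⟩)) hfu'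
  exact ⟨x, hxs, fun z hz => hfx ▸ hμ z hz⟩

lemma le_of_forall_le_add_mul {x y c : ℝ} (h : ∀ t ∈ Ioc (0 : ℝ) 1, x ≤ y + t * c) : x ≤ y := by
  have hlim : Tendsto (fun t : ℝ => y + t * c) (𝓝[>] 0) (𝓝 y) := by
    have hcont : Continuous fun t : ℝ => y + t * c := by fun_prop
    exact (hcont.tendsto' 0 y (by simp)).mono_left nhdsWithin_le_nhds
  exact ge_of_tendsto hlim (mem_of_superset (Ioc_mem_nhdsGT zero_lt_one) h)

end StrongConvexity

namespace VariationalInequality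

variable {E : Type*} [NormedAddCommGroup E] [NormedSpace ℝ E] {a : E →L[ℝ] E →L[ℝ] ℝ}
  {j : E → ℝ} {L : E →L[ℝ] ℝ} {s : Set E} {α : ℝ}

noncomputable def energy (a : E →L[ℝ] E →L[ℝ] ℝ) (j : E → ℝ) (L : E →L[ℝ] ℝ) (v : E) : ℝ :=
  a v v / 2 + j v - L v

lemma apply_add_smul_self (hsymm : ∀ u v, a u v = a v u) (x d : E) (t : ℝ) :
    a (x + t • d) (x + t • d) = a x x + 2 * t * a x d + t ^ 2 * a d d := by
  simp only [map_add, map_smul, add_apply, smul_apply, smul_eq_mul, hsymm d x]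
  ring

lemma strongConvexOn_half_apply_self (hsymm : ∀ u v, a u v = a v u)
    (hcoer : ∀ v, α * ‖v‖ ^ 2 ≤ a v v) (hs : Convex ℝ s) :
    StrongConvexOn s α fun v => a v v / 2 := by
  refine ⟨hs, fun x _ y _ p q hp hq hpq => ?_⟩
  obtain rfl : q = 1 - p := by linarith
  have hcomb : p • x + (1 - p) • y = y + p • (x - y) := by module
  have hxx : a x x = a y y + 2 * a y (x - y) + a (x - y) (x - y) := by
    simpa using apply_add_smul_self hsymm y (x - y) 1
  show a (p • x + (1 - p) • y) (p • x + (1 - p) • y) / 2 ≤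
    p * (a x x / 2) + (1 - p) * (a y y / 2) - p * (1 - p) * (α / 2 * ‖x - y‖ ^ 2)
  rw [hcomb, apply_add_smul_self hsymm, hxx]
  nlinarith [mul_le_mul_of_nonneg_left (hcoer (x - y)) (mul_nonneg hp hq)]

lemma strongConvexOn_energy (hsymm : ∀ u v, a u v = a v u) (hcoer : ∀ v, α * ‖v‖ ^ 2 ≤ a v v)
    (hj : ConvexOn ℝ s j) : StrongConvexOn s α (energy a j L) := by
  have h := (strongConvexOn_half_apply_self hsymm hcoer hj.1).add_convexOn
    (hj.sub (L.toLinearMap.concaveOn hj.1))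
  convert h using 1
  ext v
  simp only [energy, Pi.add_apply, Pi.sub_apply, ContinuousLinearMap.coe_coe]
  ring

lemma continuous_energy (hj : Continuous j) : Continuous (energy a j L) := by
  unfold energy
  fun_prop

lemma le_energy (hα : 0 < α) (hcoer : ∀ v, α * ‖v‖ ^ 2 ≤ a v v) {c : NNReal}
    (hj : LipschitzWith c j) (v : E) :
    j 0 - (‖L‖ + c) ^ 2 / (2 * α) ≤ energy a j L v := by
  have hjv : j 0 - c * ‖v‖ ≤ j v := by
    have := hj.dist_le_mul v 0
    rw [Real.dist_eq, dist_zero_right, abs_le] at this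
    linarith
  have hLv : L v ≤ ‖L‖ * ‖v‖ := (le_abs_self _).trans (L.le_opNorm v)
  have hquad := hcoer v
  have hamgm : 0 ≤ α / 2 * ‖v‖ ^ 2 - (‖L‖ + c) * ‖v‖ + (‖L‖ + c) ^ 2 / (2 * α) := by
    have hsq : α / 2 * ‖v‖ ^ 2 - (‖L‖ + c) * ‖v‖ + (‖L‖ + c) ^ 2 / (2 * α) =
        (α * ‖v‖ - (‖L‖ + c)) ^ 2 / (2 * α) := by
      field_simp
      ring
    rw [hsq]
    positivity
  rw [energy]
  linarith

lemma apply_sub_le_of_isMinOn_energy (hsymm : ∀ u v, a u v = a v u) (hj : ConvexOn ℝ s j)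
    {w v : E} (hmin : IsMinOn (energy a j L) s w) (hw : w ∈ s) (hv : v ∈ s) :
    L (v - w) ≤ a w (v - w) + j v - j w := by
  set d := v - w
  refine le_of_forall_le_add_mul (c := a d d / 2) fun t ⟨ht, ht1⟩ => ?_
  have hcomb : (1 - t) • w + t • v = w + t • d := by module
  have hzs : w + t • d ∈ s := hj.1.add_smul_sub_mem hw hv ⟨ht.le, ht1⟩
  have hjz : j (w + t • d) ≤ (1 - t) * j w + t * j v := by
    simpa only [hcomb, smul_eq_mul] using hj.2 hw hv (sub_nonneg.2 ht1) ht.le (sub_add_cancel 1 t)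
  have hE : energy a j L w ≤ energy a j L (w + t • d) := hmin hzs
  rw [energy, energy, apply_add_smul_self hsymm, map_add, map_smul, smul_eq_mul] at hE
  have hscaled : t * L d ≤ t * (a w d + j v - j w + t * (a d d / 2)) := by nlinarith
  exact le_of_mul_le_mul_left hscaled ht

end VariationalInequality

open VariationalInequality in
theorem stmt1_general
    {H : Type*} [NormedAddCommGroup H] [InnerProductSpace ℝ H] [CompleteSpace H]
    (a : H →L[ℝ] H →L[ℝ] ℝ)
    (hsymm : ∀ u v : H, a u v = a v u)
    (α : ℝ) (hα : 0 < α)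
    (hcoer : ∀ v : H, α * ‖v‖ ^ 2 ≤ a v v)
    (j : H → ℝ) (hjconv : ConvexOn ℝ Set.univ j)
    (cj : NNReal) (hjlip : LipschitzWith cj j)
    (L : H →L[ℝ] ℝ)
    (K : Set H) (hKne : K.Nonempty) (hKcl : IsClosed K) (hKcv : Convex ℝ K) :
    ∃ u ∈ K, ∀ v ∈ K, L (v - u) ≤ a u (v - u) + j v - j u := by
  have hjK : ConvexOn ℝ K j := hjconv.subset (subset_univ K) hKcv
  have hbdd : BddBelow (energy a j L '' K) :=
    ⟨_, forall_mem_image.2 fun v _ => le_energy hα hcoer hjlip v⟩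
  obtain ⟨u, huK, hmin⟩ := (strongConvexOn_energy hsymm hcoer hjK).exists_isMinOn hα hKcl hKne
    (continuous_energy hjlip.continuous).continuousOn hbdd
  exact ⟨u, huK, fun v hv => apply_sub_le_of_isMinOn_energy hsymm hjK hmin huK hv⟩

/-- Existence of a solution of an elliptic variational inequality of the second kind. -/
theorem stmt1
    {H : Type*} [NormedAddCommGroup H] [InnerProductSpace ℝ H] [CompleteSpace H]
    (a : H →L[ℝ] H →L[ℝ] ℝ)
    (hsymm : ∀ u v : H, a u v = a v u)
    (α : ℝ) (hα : 0 < α)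
    (hcoer : ∀ v : H, α * ‖v‖ ^ 2 ≤ a v v)
    (j : H → ℝ) (hjconv : ConvexOn ℝ Set.univ j)
    (hjnonneg : ∀ v, 0 ≤ j v)
    (cj : NNReal) (hjlip : LipschitzWith cj j)
    (L : H →L[ℝ] ℝ)
    (K : Set H) (hKne : K.Nonempty) (hKcl : IsClosed K) (hKcv : Convex ℝ K) :
    ∃ u ∈ K, ∀ v ∈ K, L (v - u) ≤ a u (v - u) + j v - j u :=
  stmt1_general a hsymm α hα hcoer j hjconv cj hjlip L K hKne hKcl hKcv
end

section
/- Let V be a real Hilbert space with symmetric bounded coercive bilinear form a, let λ, λ̃ ∈ V, and let K(λ) = {v ∈ V : B(v) ≤ -ℓ(λ)} where the constraint is such that K(λ) = E λ + K(0) for a bounded linear map E : V → V with a(Ev, w) well-defined, K(0) a closed convex cone. Let j_λ(v) = J(v - Eλ) for a convex Lipschitz J, and let u(λ) ∈ K(λ) solve a(u, v - u) + j_λ(v) - j_λ(u) ≥ L(v - u) for all v ∈ K(λ). Then a(u(λ) - u(λ̃), u(λ) - u(λ̃)) ≤ a(u(λ) - u(λ̃), E(λ - λ̃)), and consequently ‖u(λ)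 - u(λ̃)‖_a ≤ ‖E(λ - λ̃)‖_a. -/
/-!
Test the inequality for `u(λ)` with `u(λ̃) + E(λ - λ̃) ∈ K(λ)` and the one for `u(λ̃)` with
`u(λ) - E(λ - λ̃) ∈ K(λ̃)`. Both friction terms then become `±(J(u(λ̃) - Eλ̃) - J(u(λ) - Eλ))`,
so adding the two inequalities cancels them together with the load `L`. The energy-norm bound
follows by Cauchy–Schwarz for `a`.
-/

namespace LinearMap.BilinForm

variable {R M : Type*} [CommRing R] [LinearOrder R] [IsStrictOrderedRing R]
  [AddCommGroup M] [Module R M]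

/-- With `s = Eλ`: `u ∈ K(λ) = s + K` solves the variational inequality with friction
`j_λ(v) = J(v - s)`. -/
def IsTranslatedVISolution (B : LinearMap.BilinForm R M) (L : M →ₗ[R] R) (J : M → R)
    (K : Set M) (s u : M) : Prop :=
  u - s ∈ K ∧ ∀ v, v - s ∈ K → L (v - u) ≤ B u (v - u) + J (v - s) - J (u - s)

theorem IsTranslatedVISolution.apply_sub_le_apply_sub_shift {B : LinearMap.BilinForm R M}
    {L : M →ₗ[R] R} {J : M → R} {K : Set M} {s st u ut : M}
    (h : IsTranslatedVISolution B L J K s u)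
    (ht : IsTranslatedVISolution B L J K st ut) :
    B (u - ut) (u - ut) ≤ B (u - ut) (s - st) := by
  have hK₁ : ut + (s - st) - s = ut - st := by abel
  have hK₂ : u - (s - st) - st = u - s := by abel
  have h₁ := h.2 (ut + (s - st)) (hK₁ ▸ ht.1)
  have h₂ := ht.2 (u - (s - st)) (hK₂ ▸ h.1)
  rw [hK₁, show ut + (s - st) - u = -(u - ut - (s - st)) by abel, map_neg, map_neg] at h₁
  rw [hK₂, show u - (s - st) - ut = u - ut - (s - st) by abel] at h₂
  linarith [B.sub_left u ut (u - ut - (s - st)), B.sub_right (u - ut) (u - ut) (s - st)]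

theorem apply_self_le_of_apply_self_le_apply (B : LinearMap.BilinForm R M) (hB : B.IsSymm)
    (hs : ∀ x, 0 ≤ B x x) {x y : M} (hxy : B x x ≤ B x y) : B x x ≤ B y y := by
  rcases (hs x).eq_or_lt with hx | hx
  · exact hx ▸ hs y
  have hsq : B x x * B x x ≤ B x x * B y y :=
    calc B x x * B x x ≤ B x y ^ 2 := (sq (B x y)).symm ▸ mul_self_le_mul_self (hs x) hxy
      _ ≤ B x x * B y y := B.apply_sq_le_of_symm hs (isSymm_iff.1 hB) x y
  exact le_of_mul_le_mul_left hsq hx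

end LinearMap.BilinForm

theorem stmt10_general
    {V : Type*} [NormedAddCommGroup V] [InnerProductSpace ℝ V]
    (a : V →L[ℝ] V →L[ℝ] ℝ)
    (hsymm : ∀ u v : V, a u v = a v u)
    (α : ℝ) (hα : 0 < α)
    (hcoer : ∀ v : V, α * ‖v‖ ^ 2 ≤ a v v)
    (E : V →L[ℝ] V)
    (K0 : Set V)
    (J : V → ℝ)
    (L : V →L[ℝ] ℝ)
    (lam lamt : V) (u ut : V)
    (hu : u - E lam ∈ K0) (hut : ut - E lamt ∈ K0)
    (hVI : ∀ v : V, v - E lam ∈ K0 →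
      L (v - u) ≤ a u (v - u) + J (v - E lam) - J (u - E lam))
    (hVIt : ∀ v : V, v - E lamt ∈ K0 →
      L (v - ut) ≤ a ut (v - ut) + J (v - E lamt) - J (ut - E lamt)) :
    a (u - ut) (u - ut) ≤ a (u - ut) (E (lam - lamt)) ∧
    Real.sqrt (a (u - ut) (u - ut)) ≤
      Real.sqrt (a (E (lam - lamt)) (E (lam - lamt))) := by
  have hnonneg (v : V) : 0 ≤ a.toBilinForm v v :=
    (mul_nonneg hα.le (sq_nonneg _)).trans (hcoer v)
  have hstab : a (u - ut) (u - ut) ≤ a (u - ut) (E (lam - lamt)) := by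
    rw [E.map_sub]
    exact LinearMap.BilinForm.IsTranslatedVISolution.apply_sub_le_apply_sub_shift
      (B := a.toBilinForm) (L := L.toLinearMap) ⟨hu, hVI⟩ ⟨hut, hVIt⟩
  exact ⟨hstab, Real.sqrt_le_sqrt <| a.toBilinForm.apply_self_le_of_apply_self_le_apply
    (LinearMap.BilinForm.isSymm_def.2 hsymm) hnonneg hstab⟩

/-- Stability of the parametrized contact subproblem with respect to the interface
data: `a(u(λ) - u(λ̃), u(λ) - u(λ̃)) ≤ a(u(λ) - u(λ̃), E(λ - λ̃))`, hence the energy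
norm of the difference of solutions is bounded by that of `E(λ - λ̃)`. -/
theorem stmt10
    {V : Type*} [NormedAddCommGroup V] [InnerProductSpace ℝ V] [CompleteSpace V]
    (a : V →L[ℝ] V →L[ℝ] ℝ)
    (hsymm : ∀ u v : V, a u v = a v u)
    (α : ℝ) (hα : 0 < α)
    (hcoer : ∀ v : V, α * ‖v‖ ^ 2 ≤ a v v)
    (E : V →L[ℝ] V)
    (K0 : Set V) (hK0cl : IsClosed K0) (hK0cv : Convex ℝ K0)
    (hK0cone : ∀ c : ℝ, 0 ≤ c → ∀ x ∈ K0, c • x ∈ K0)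
    (J : V → ℝ) (hJconv : ConvexOn ℝ Set.univ J)
    (cJ : NNReal) (hJlip : LipschitzWith cJ J)
    (L : V →L[ℝ] ℝ)
    (lam lamt : V) (u ut : V)
    (hu : u - E lam ∈ K0) (hut : ut - E lamt ∈ K0)
    (hVI : ∀ v : V, v - E lam ∈ K0 →
      L (v - u) ≤ a u (v - u) + J (v - E lam) - J (u - E lam))
    (hVIt : ∀ v : V, v - E lamt ∈ K0 →
      L (v - ut) ≤ a ut (v - ut) + J (v - E lamt) - J (ut - E lamt)) :
    a (u - ut) (u - ut) ≤ a (u - ut) (E (lam - lamt)) ∧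
    Real.sqrt (a (u - ut) (u - ut)) ≤
      Real.sqrt (a (E (lam - lamt)) (E (lam - lamt))) :=
  stmt10_general a hsymm α hα hcoer E K0 J L lam lamt u ut hu hut hVI hVIt
end

section
/- Let H be a real Hilbert space, a a symmetric bounded coercive bilinear form, K₀ ⊆ H a closed convex cone, E : Λ → H a bounded linear map from a Hilbert space Λ, j a convex Lipschitz functional, L continuous linear. For λ ∈ Λ let u(λ) be the unique solution of the variational inequality a(u, v - u) + j(v - Eλ) - j(u - Eλ) ≥ L(v - u) over K(λ) = Eλ + K₀. Then the solution map λ ↦ u(λ) is Lipschitz: ‖u(λ) - u(μ)‖_a ≤ ‖E(λ - μ)‖_a ≤ ‖E‖·‖λ - μ‖_Λ. -/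
/-!
Test the inequality for `u(λ)` with `v = u(μ) + E(λ - μ)` and the one for `u(μ)` with
`v = u(λ) - E(λ - μ)`: both are admissible because they are the translates of the other
solution by the difference of the shifts, and adding the two inequalities cancels `L` and the
friction terms, leaving `a(w, w) ≤ a(w, E(λ - μ))` for `w = u(λ) - u(μ)`. Cauchy–Schwarz for the
symmetric nonnegative form `a` then gives `‖w‖_a ≤ ‖E(λ - μ)‖_a`.
-/

section BilinearForm

variable {H : Type*} [SeminormedAddCommGroup H] [NormedSpace ℝ H]
  {a : H →L[ℝ] H →L[ℝ] ℝ}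

theorem sq_apply_le_apply_self_mul_apply_self (hsymm : ∀ x y : H, a x y = a y x)
    (hnonneg : ∀ v : H, 0 ≤ a v v) (x y : H) : a x y ^ 2 ≤ a x x * a y y := by
  have hquad : ∀ t : ℝ, 0 ≤ a y y * (t * t) + 2 * a x y * t + a x x := fun t => by
    have h := hnonneg (x + t • y)
    simp only [map_add, map_smul, add_apply,
      smul_apply, smul_eq_mul, hsymm y x] at h
    linarith
  have := discrim_le_zero hquad
  rw [discrim] at this
  linarith

theorem apply_self_le_of_apply_self_le_apply (hsymm : ∀ x y : H, a x y = a y x)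
    (hnonneg : ∀ v : H, 0 ≤ a v v) {w e : H} (h : a w w ≤ a w e) : a w w ≤ a e e := by
  have hcs := sq_apply_le_apply_self_mul_apply_self hsymm hnonneg w e
  have hw := hnonneg w
  have he := hnonneg e
  nlinarith

end BilinearForm

section Tresca

variable {H : Type*} [SeminormedAddCommGroup H] [NormedSpace ℝ H]

def IsTrescaSolution (a : H →L[ℝ] H →L[ℝ] ℝ) (L : H →L[ℝ] ℝ) (j : H → ℝ) (K0 : Set H)
    (g u : H) : Prop :=
  u - g ∈ K0 ∧ ∀ v : H, v - g ∈ K0 → L (v - u) ≤ a u (v - u) + j (v - g) - j (u - g)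

theorem IsTrescaSolution.apply_sub_le {a : H →L[ℝ] H →L[ℝ] ℝ} {L : H →L[ℝ] ℝ} {j : H → ℝ}
    {K0 : Set H} {g₁ g₂ u₁ u₂ : H} (h₁ : IsTrescaSolution a L j K0 g₁ u₁)
    (h₂ : IsTrescaSolution a L j K0 g₂ u₂) :
    a (u₁ - u₂) (u₁ - u₂) ≤ a (u₁ - u₂) (g₁ - g₂) := by
  have test₁ := h₁.2 (u₂ + (g₁ - g₂)) (by convert h₂.1 using 1; abel)
  have test₂ := h₂.2 (u₁ - (g₁ - g₂)) (by convert h₁.1 using 1; abel)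
  have hv₁ : u₂ + (g₁ - g₂) - u₁ = -(u₁ - u₂ - (g₁ - g₂)) := by abel
  have hv₂ : u₁ - (g₁ - g₂) - u₂ = u₁ - u₂ - (g₁ - g₂) := by abel
  have hs₁ : u₂ + (g₁ - g₂) - g₁ = u₂ - g₂ := by abel
  have hs₂ : u₁ - (g₁ - g₂) - g₂ = u₁ - g₁ := by abel
  rw [hv₁, hs₁] at test₁
  rw [hv₂, hs₂] at test₂
  simp only [map_neg, map_sub, sub_apply] at test₁ test₂ ⊢
  linarith

end Tresca

theorem stmt17_general
    {H Λ : Type*}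
    [NormedAddCommGroup H] [InnerProductSpace ℝ H]
    [NormedAddCommGroup Λ] [InnerProductSpace ℝ Λ]
    (a : H →L[ℝ] H →L[ℝ] ℝ)
    (hsymm : ∀ u v : H, a u v = a v u)
    (α : ℝ) (hα : 0 < α)
    (hcoer : ∀ v : H, α * ‖v‖ ^ 2 ≤ a v v)
    (K0 : Set H)
    (E : Λ →L[ℝ] H)
    (CE : ℝ) (hCE : ∀ x : Λ, Real.sqrt (a (E x) (E x)) ≤ CE * ‖x‖)
    (j : H → ℝ)
    (L : H →L[ℝ] ℝ)
    (u : Λ → H)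
    (hmem : ∀ lam : Λ, u lam - E lam ∈ K0)
    (hVI : ∀ lam : Λ, ∀ v : H, v - E lam ∈ K0 →
      L (v - u lam) ≤ a (u lam) (v - u lam) + j (v - E lam) - j (u lam - E lam)) :
    ∀ lam mu : Λ,
      Real.sqrt (a (u lam - u mu) (u lam - u mu)) ≤
        Real.sqrt (a (E (lam - mu)) (E (lam - mu))) ∧
      Real.sqrt (a (E (lam - mu)) (E (lam - mu))) ≤ CE * ‖lam - mu‖ := by
  intro lam mu
  refine ⟨Real.sqrt_le_sqrt ?_, hCE (lam - mu)⟩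
  have hnonneg : ∀ v : H, 0 ≤ a v v := fun v => le_trans (by positivity) (hcoer v)
  have hsol : ∀ x : Λ, IsTrescaSolution a L j K0 (E x) (u x) := fun x => ⟨hmem x, hVI x⟩
  have hkey := (hsol lam).apply_sub_le (hsol mu)
  rw [← map_sub] at hkey
  exact apply_self_le_of_apply_self_le_apply hsymm hnonneg hkey

/-- Lipschitz dependence of the solution of the parametrized Tresca-friction
subproblem on the interface datum: `‖u(λ) - u(μ)‖_a ≤ ‖E(λ - μ)‖_a ≤ ‖E‖ ‖λ - μ‖`,
where `CE` is the norm of `E` as an operator into `(H, ‖·‖_a)`. -/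
theorem stmt17
    {H Λ : Type*}
    [NormedAddCommGroup H] [InnerProductSpace ℝ H] [CompleteSpace H]
    [NormedAddCommGroup Λ] [InnerProductSpace ℝ Λ] [CompleteSpace Λ]
    (a : H →L[ℝ] H →L[ℝ] ℝ)
    (hsymm : ∀ u v : H, a u v = a v u)
    (α : ℝ) (hα : 0 < α)
    (hcoer : ∀ v : H, α * ‖v‖ ^ 2 ≤ a v v)
    (K0 : Set H) (hK0cl : IsClosed K0) (hK0cv : Convex ℝ K0)
    (hK0cone : ∀ c : ℝ, 0 ≤ c → ∀ x ∈ K0, c • x ∈ K0)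
    (E : Λ →L[ℝ] H)
    (CE : ℝ) (hCE : ∀ x : Λ, Real.sqrt (a (E x) (E x)) ≤ CE * ‖x‖)
    (j : H → ℝ) (hjconv : ConvexOn ℝ Set.univ j)
    (cj : NNReal) (hjlip : LipschitzWith cj j)
    (L : H →L[ℝ] ℝ)
    (u : Λ → H)
    (hmem : ∀ lam : Λ, u lam - E lam ∈ K0)
    (hVI : ∀ lam : Λ, ∀ v : H, v - E lam ∈ K0 →
      L (v - u lam) ≤ a (u lam) (v - u lam) + j (v - E lam) - j (u lam - E lam))
    (huniq : ∀ (lam : Λ) (w : H), w - E lam ∈ K0 →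
      (∀ v : H, v - E lam ∈ K0 →
        L (v - w) ≤ a w (v - w) + j (v - E lam) - j (w - E lam)) → w = u lam) :
    ∀ lam mu : Λ,
      Real.sqrt (a (u lam - u mu) (u lam - u mu)) ≤
        Real.sqrt (a (E (lam - mu)) (E (lam - mu))) ∧
      Real.sqrt (a (E (lam - mu)) (E (lam - mu))) ≤ CE * ‖lam - mu‖ :=
  stmt17_general a hsymm α hα hcoer K0 E CE hCE j L u hmem hVI
end
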